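/- The sequence c_k := ∑_{m≥0} (k+1)(k-1)/[k(m+1)(m+k)·binom(m+2+1/k, m+1)] · (2 - (k-2)/(m+k-1)) satisfies c_k → 1 as k → ∞. -/

import Mathlib

/-!
Tannery's theorem (dominated convergence for series). Since
`binom(m + 2 + 1/k, m + 1) → binom(m + 2, m + 1) = m + 2`, the `m`-th summand of `c_k` tends to
`1 / ((m + 1)(m + 2))` as `k → ∞`, and these limits telescope to `1`. For `k ≥ 2` the summand
is dominated by `2 / ((m + 1)(m + 2))`: the three factors of the summand are bounded by `1`,
`1 / ((m + 1)(m + 2))` (the generalized binomial coefficient is monotone where all its factors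
are nonnegative) and `2`.
-/

open Filter

/-- Generalized binomial coefficient `binom(x, n) = x(x-1)⋯(x-n+1)/n!`. -/
noncomputable def gbinom (x : ℝ) (n : ℕ) : ℝ :=
  (∏ i ∈ Finset.range n, (x - i)) / (Nat.factorial n)

/-- The limiting expected local clustering coefficient `c_k` of a random node in a
random ordered increasing `k`-tree. -/
noncomputable def cLim (k : ℕ) : ℝ :=
  ∑' m : ℕ,
    ((k : ℝ) + 1) * ((k : ℝ) - 1)
      / ((k : ℝ) * ((m : ℝ) + 1) * ((m : ℝ) + k) * gbinom ((m : ℝ) + 2 + 1 / (k : ℝ)) (m + 1))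
      * (2 - ((k : ℝ) - 2) / ((m : ℝ) + (k : ℝ) - 1))

open Topology

lemma gbinom_eq_descPochhammer_eval (x : ℝ) (n : ℕ) :
    gbinom x n = (descPochhammer ℝ n).eval x / n.factorial := by
  rw [gbinom, descPochhammer_eval_eq_prod_range]

lemma gbinom_natCast (a n : ℕ) : gbinom a n = a.choose n := by
  rw [gbinom_eq_descPochhammer_eval, descPochhammer_eval_eq_descFactorial,
    Nat.descFactorial_eq_factorial_mul_choose, Nat.cast_mul,
    mul_div_cancel_left₀ _ (Nat.cast_ne_zero.2 n.factorial_ne_zero)]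

lemma continuous_gbinom (n : ℕ) : Continuous (gbinom · n) := by
  simp only [gbinom_eq_descPochhammer_eval]
  exact continuous_descPochhammer_eval.div_const _

lemma gbinom_natCast_add_two (m : ℕ) : gbinom ((m : ℝ) + 2) (m + 1) = m + 2 := by
  simpa [Nat.choose_succ_self_right, add_assoc, one_add_one_eq_two] using
    gbinom_natCast (m + 2) (m + 1)

lemma gbinom_le_gbinom {x y : ℝ} (n : ℕ) (hx : (n : ℝ) - 1 ≤ x) (hxy : x ≤ y) :
    gbinom x n ≤ gbinom y n := by
  refine div_le_div_of_nonneg_right (Finset.prod_le_prod (fun i hi => ?_) fun i _ => by linarith)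
    (Nat.cast_nonneg _)
  have : (i : ℝ) + 1 ≤ n := by exact_mod_cast Finset.mem_range.1 hi
  linarith

lemma hasSum_one_div_succ_mul_succ_succ :
    HasSum (fun m : ℕ => 1 / (((m : ℝ) + 1) * ((m : ℝ) + 2))) 1 := by
  have partial_fractions (m : ℕ) :
      1 / (((m : ℝ) + 1) * ((m : ℝ) + 2)) = 1 / ((m : ℝ) + 1) - 1 / (((m + 1 : ℕ) : ℝ) + 1) := by
    push_cast
    field_simp
    ring
  rw [hasSum_iff_tendsto_nat_of_nonneg (fun m => by positivity)]
  simp_rw [partial_fractions, Finset.sum_range_sub']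
  simpa using tendsto_const_nhds.sub (tendsto_one_div_add_atTop_nhds_zero_nat (𝕜 := ℝ))

lemma tendsto_natCast_add_div_natCast_add (a b : ℝ) :
    Tendsto (fun k : ℕ => ((k : ℝ) + a) / ((k : ℝ) + b)) atTop (𝓝 1) := by
  simp_rw [add_div]
  simpa using (tendsto_natCast_div_add_atTop (𝕜 := ℝ) b).add
    (tendsto_const_nhds.div_atTop (tendsto_natCast_atTop_atTop.atTop_add tendsto_const_nhds))

noncomputable def cLimTerm (k m : ℕ) : ℝ :=
  ((k : ℝ) + 1) * ((k : ℝ) - 1)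
      / ((k : ℝ) * ((m : ℝ) + 1) * ((m : ℝ) + k) * gbinom ((m : ℝ) + 2 + 1 / (k : ℝ)) (m + 1))
      * (2 - ((k : ℝ) - 2) / ((m : ℝ) + (k : ℝ) - 1))

lemma cLimTerm_eq (k m : ℕ) :
    cLimTerm k m = ((k : ℝ) + 1) * ((k : ℝ) - 1) / ((k : ℝ) * ((k : ℝ) + m))
      * (1 / (((m : ℝ) + 1) * gbinom ((m : ℝ) + 2 + 1 / (k : ℝ)) (m + 1)))
      * (2 - ((k : ℝ) - 2) / ((k : ℝ) + ((m : ℝ) - 1))) := by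
  rw [cLimTerm, div_mul_div_comm, mul_one]
  ring

lemma tendsto_cLimTerm (m : ℕ) :
    Tendsto (cLimTerm · m) atTop (𝓝 (1 / (((m : ℝ) + 1) * ((m : ℝ) + 2)))) := by
  have hA : Tendsto (fun k : ℕ => ((k : ℝ) + 1) * ((k : ℝ) - 1) / ((k : ℝ) * ((k : ℝ) + m)))
      atTop (𝓝 1) := by
    simpa [mul_div_mul_comm, sub_eq_add_neg] using
      (tendsto_natCast_add_div_natCast_add 1 0).mul (tendsto_natCast_add_div_natCast_add (-1) m)
  have hbinom : Tendsto (fun k : ℕ => gbinom ((m : ℝ) + 2 + 1 / (k : ℝ)) (m + 1)) atTop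
      (𝓝 ((m : ℝ) + 2)) := by
    have harg : Tendsto (fun k : ℕ => (m : ℝ) + 2 + 1 / (k : ℝ)) atTop (𝓝 ((m : ℝ) + 2)) := by
      simpa using tendsto_const_nhds.add (tendsto_one_div_atTop_nhds_zero_nat (𝕜 := ℝ))
    have := ((continuous_gbinom (m + 1)).tendsto ((m : ℝ) + 2)).comp harg
    rwa [gbinom_natCast_add_two] at this
  have hC : Tendsto (fun k : ℕ => ((k : ℝ) - 2) / ((k : ℝ) + ((m : ℝ) - 1))) atTop (𝓝 1) := by
    simpa [sub_eq_add_neg] using tendsto_natCast_add_div_natCast_add (-2) ((m : ℝ) - 1)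
  simp_rw [cLimTerm_eq]
  rw [show 1 / (((m : ℝ) + 1) * ((m : ℝ) + 2)) = 1 * (1 / (((m : ℝ) + 1) * ((m : ℝ) + 2))) * (2 - 1)
    by ring]
  exact (hA.mul (tendsto_const_nhds.div (tendsto_const_nhds.mul hbinom) (by positivity))).mul
    (tendsto_const_nhds.sub hC)

lemma norm_cLimTerm_le {k : ℕ} (hk : 2 ≤ k) (m : ℕ) :
    ‖cLimTerm k m‖ ≤ 2 / (((m : ℝ) + 1) * ((m : ℝ) + 2)) := by
  have hk' : (2 : ℝ) ≤ k := by exact_mod_cast hk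
  have hm : (0 : ℝ) ≤ m := m.cast_nonneg
  have hA0 : 0 ≤ ((k : ℝ) + 1) * ((k : ℝ) - 1) / ((k : ℝ) * ((k : ℝ) + m)) :=
    div_nonneg (by nlinarith) (by positivity)
  have hA1 : ((k : ℝ) + 1) * ((k : ℝ) - 1) / ((k : ℝ) * ((k : ℝ) + m)) ≤ 1 :=
    (div_le_one (by positivity)).2 (by nlinarith)
  have hbinom : (m : ℝ) + 2 ≤ gbinom ((m : ℝ) + 2 + 1 / (k : ℝ)) (m + 1) := by
    refine (gbinom_natCast_add_two m).symm.le.trans (gbinom_le_gbinom (m + 1) ?_ ?_)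
    · push_cast
      linarith
    · exact le_add_of_nonneg_right (one_div_nonneg.2 k.cast_nonneg)
  have hB0 : 0 ≤ 1 / (((m : ℝ) + 1) * gbinom ((m : ℝ) + 2 + 1 / (k : ℝ)) (m + 1)) := by
    have : 0 ≤ gbinom ((m : ℝ) + 2 + 1 / (k : ℝ)) (m + 1) := by linarith
    positivity
  have hB1 : 1 / (((m : ℝ) + 1) * gbinom ((m : ℝ) + 2 + 1 / (k : ℝ)) (m + 1))
      ≤ 1 / (((m : ℝ) + 1) * ((m : ℝ) + 2)) :=
    one_div_le_one_div_of_le (by positivity) (by gcongr)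
  have hratio : 0 ≤ ((k : ℝ) - 2) / ((k : ℝ) + ((m : ℝ) - 1)) ∧
      ((k : ℝ) - 2) / ((k : ℝ) + ((m : ℝ) - 1)) ≤ 1 :=
    ⟨div_nonneg (by linarith) (by linarith), (div_le_one (by linarith)).2 (by linarith)⟩
  rw [cLimTerm_eq, Real.norm_of_nonneg (mul_nonneg (mul_nonneg hA0 hB0) (by linarith))]
  calc _ ≤ 1 * (1 / (((m : ℝ) + 1) * ((m : ℝ) + 2))) * 2 :=
        mul_le_mul (mul_le_mul hA1 hB1 hB0 zero_le_one) (by linarith) (by linarith) (by positivity)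
    _ = 2 / (((m : ℝ) + 1) * ((m : ℝ) + 2)) := by ring

/-- `c_k → 1` as `k → ∞`. -/
theorem ktree_clustering_limit : Tendsto cLim atTop (nhds 1) := by
  have hdom := tendsto_tsum_of_dominated_convergence
    ((hasSum_one_div_succ_mul_succ_succ.summable.mul_left 2).congr fun m => by ring)
    tendsto_cLimTerm ((eventually_ge_atTop 2).mono fun k hk => norm_cLimTerm_le hk)
  rwa [hasSum_one_div_succ_mul_succ_succ.tsum_eq] at hdom
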